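/- Let k be a field and A = k[x,y]. Define the A-linear maps d_2 : A → A^3 by d_2(1) = (−x·y, x^2, −y), and d_1 : A^3 → A^3 by d_1(e_1) = (x, −x, 0), d_1(e_2) = (y, 0, −y), d_1(e_3) = (0, x^2, −x^2). Then d_2 is injective and the image of d_2 equals the kernel of d_1; that is, 0 → A →^{d_2} A^3 →^{d_1} A^3 is exact. -/

import Mathlib

open MvPolynomial

noncomputable section

/-- `A = k[x,y]`. -/
abbrev A2 (k : Type) [Field k] := MvPolynomial (Fin 2) k

/-- The matrix of `d₁ : A³ → A³` with columns `(x,−x,0)`, `(y,0,−y)`, `(0,x²,−x²)`. -/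
def d1Matrix (k : Type) [Field k] : Matrix (Fin 3) (Fin 3) (A2 k) :=
  Matrix.of
    ![![X 0, X 1, 0],
      ![-(X 0), 0, (X 0)^2],
      ![0, -(X 1), -((X 0)^2)]]

/-- `d₂ : A → A³`, `1 ↦ (−xy, x², −y)`. -/
def d2Map (k : Type) [Field k] : A2 k →ₗ[A2 k] (Fin 3 → A2 k) :=
  LinearMap.toSpanSingleton (A2 k) (Fin 3 → A2 k) ![-(X 0 * X 1), (X 0)^2, -(X 1)]

/-! The last two rows of `d₁ w = 0` say `x w₀ = x² w₂` and `y w₁ = -x² w₂`. Since `y` is prime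
and does not divide `x`, it divides `w₂ = y s`, and cancelling in the domain `A` gives
`w = -s • d₂(1)`; the first row of `d₁` imposes nothing further. Injectivity of `d₂` holds because
`A` is a domain and `d₂(1) ≠ 0`. -/

section

variable {R : Type*} [CommRing R] [IsDomain R] {x y : R}

theorem exists_eq_of_mul_eq_sq_mul (hx : x ≠ 0) (hy : Prime y) (hyx : ¬ y ∣ x) {a b c : R}
    (hxa : x * a = x ^ 2 * c) (hyb : y * b = -(x ^ 2 * c)) :
    ∃ s, a = x * y * s ∧ b = -(x ^ 2 * s) ∧ c = y * s := by
  have hy_dvd : y ∣ x ^ 2 * c := ⟨-b, by rw [mul_neg, hyb, neg_neg]⟩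
  obtain ⟨s, rfl⟩ := (hy.dvd_or_dvd hy_dvd).resolve_left fun h => hyx (hy.dvd_of_dvd_pow h)
  refine ⟨s, mul_left_cancel₀ hx ?_, mul_left_cancel₀ hy.ne_zero ?_, rfl⟩
  · rw [hxa]; ring
  · rw [hyb]; ring

end

section

open Matrix

variable (k : Type) [Field k]

theorem d1Matrix_mulVec (w : Fin 3 → A2 k) :
    d1Matrix k *ᵥ w =
      ![X 0 * w 0 + X 1 * w 1, -(X 0 * w 0) + X 0 ^ 2 * w 2, -(X 1 * w 1) - X 0 ^ 2 * w 2] := by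
  funext i
  fin_cases i <;> simp [d1Matrix, mulVec, dotProduct, Fin.sum_univ_three, sub_eq_add_neg]

theorem d2Map_injective : Function.Injective (d2Map k) :=
  smul_left_injective _ fun h => X_ne_zero (R := k) 1 (by simpa using congrFun h 2)

theorem toLin'_d1Matrix_comp_d2Map : toLin' (d1Matrix k) ∘ₗ d2Map k = 0 := by
  ext : 1
  simp only [LinearMap.comp_apply, toLin'_apply, d1Matrix_mulVec, d2Map,
    LinearMap.toSpanSingleton_apply_one, LinearMap.zero_apply]
  funext i
  fin_cases i <;> simp only [Fin.zero_eta, Fin.mk_one, Fin.reduceFinMk, Fin.isValue, cons_val_zero,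
    cons_val_one, cons_val_two, tail_cons, head_cons, Pi.zero_apply] <;> ring

theorem ker_toLin'_d1Matrix_le_range_d2Map :
    LinearMap.ker (toLin' (d1Matrix k)) ≤ LinearMap.range (d2Map k) := by
  intro w hw
  rw [LinearMap.mem_ker, toLin'_apply, d1Matrix_mulVec] at hw
  have row1 : X 0 * w 0 = X 0 ^ 2 * w 2 := by simpa [neg_add_eq_zero] using congrFun hw 1
  have row2 : X 1 * w 1 = -(X 0 ^ 2 * w 2) := by
    simpa [sub_eq_zero, neg_eq_iff_eq_neg] using congrFun hw 2
  obtain ⟨s, hw0, hw1, hw2⟩ :=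
    exists_eq_of_mul_eq_sq_mul (X_ne_zero 0) X_prime (by simp [X_dvd_X]) row1 row2
  refine ⟨-s, funext fun i => ?_⟩
  fin_cases i <;> simp only [d2Map, Fin.isValue, Fin.zero_eta, Fin.mk_one, Fin.reduceFinMk,
    LinearMap.toSpanSingleton_apply, Pi.smul_apply, cons_val_zero, cons_val_one, cons_val,
    smul_eq_mul, hw0, hw1, hw2] <;> ring

end

/-- The sequence `0 → A →^{d₂} A³ →^{d₁} A³` is exact: `d₂` is injective and
`im d₂ = ker d₁`, where `d₂(1) = (−xy, x², −y)` and `d₁` has columns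
`(x,−x,0)`, `(y,0,−y)`, `(0,x²,−x²)`. -/
theorem d2_injective_and_range_eq_ker (k : Type) [Field k] :
    Function.Injective (d2Map k) ∧
      LinearMap.range (d2Map k) = LinearMap.ker (Matrix.toLin' (d1Matrix k)) :=
  ⟨d2Map_injective k, le_antisymm (LinearMap.range_le_ker_iff.mpr (toLin'_d1Matrix_comp_d2Map k))
    (ker_toLin'_d1Matrix_le_range_d2Map k)⟩

end
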